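/- arXiv:2601.11274 — 3 statements merged into one kernel-verified Lean document; each statement's English description precedes it below -/
import Mathlib

section
/- Let ν be a parametric b-measure on ℝ^N with respect to a non-decreasing family of moduli of continuity {ω_j}_{j≥1}, and let y : [a,b] → ℝ^N be continuous. Then for every ε > 0 there exists δ(ε) > 0 such that for every partition a = t₁ < t₂ < ⋯ < t_k = b of [a,b] and all points τ_i, τ̃_i ∈ [a,b] (1 ≤ i ≤ k−1) with |τ_i − τ̃_i| < δ(ε), one has |Σ_{i=1}^{k−1} (ν_{y(τ_i)} − ν_{y(τ̃_i)})([t_i, t_{i+1}])| < ε. -/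
open MeasureTheory Set Filter Topology

/-- A (continuous real) b-measure: a set function on the bounded Borel subsets of `ℝ`
which vanishes on `∅`, is countably additive over countable pairwise disjoint families
of bounded Borel sets with bounded union, and vanishes on singletons. -/
structure IsBMeasure (μ : Set ℝ → ℝ) : Prop where
  empty : μ ∅ = 0
  countably_additive : ∀ A : ℕ → Set ℝ, (∀ n, MeasurableSet (A n)) →
    (∀ n, Bornology.IsBounded (A n)) → Pairwise (Function.onFun Disjoint A) →
    Bornology.IsBounded (⋃ n, A n) →
    HasSum (fun n => μ (A n)) (μ (⋃ n, A n))
  singleton : ∀ t : ℝ, μ {t} = 0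

/-- A locally finite atomless Borel measure on `ℝ`. -/
def GoodMeasure (m : Measure ℝ) : Prop :=
  IsLocallyFiniteMeasure m ∧ ∀ t : ℝ, m {t} = 0

/-- `P` is a finite Borel partition of `A`. -/
def IsBorelPartition (A : Set ℝ) {n : ℕ} (P : Fin n → Set ℝ) : Prop :=
  (∀ i, MeasurableSet (P i)) ∧ Pairwise (Function.onFun Disjoint P) ∧ (⋃ i, P i) = A

/-- `|μ| ≤ m` : total-variation bound of the set function `μ` by the measure `m`,
expressed through finite Borel partitions of bounded Borel sets. -/
def TVLE (μ : Set ℝ → ℝ) (m : Measure ℝ) : Prop :=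
  ∀ A : Set ℝ, Bornology.IsBounded A → MeasurableSet A →
    ∀ (n : ℕ) (P : Fin n → Set ℝ), IsBorelPartition A P →
      ∑ i, |μ (P i)| ≤ (m A).toReal

/-- Partition-sum bound `Σ |μ₁(Aᵢ) - μ₂(Aᵢ)| ≤ c · l(A)` for the difference of two
set functions, over finite Borel partitions of bounded Borel sets. -/
def DiffLE (μ₁ μ₂ : Set ℝ → ℝ) (c : ℝ) (l : Measure ℝ) : Prop :=
  ∀ A : Set ℝ, Bornology.IsBounded A → MeasurableSet A →
    ∀ (n : ℕ) (P : Fin n → Set ℝ), IsBorelPartition A P →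
      ∑ i, |μ₁ (P i) - μ₂ (P i)| ≤ c * (l A).toReal

variable {E : Type*} [NormedAddCommGroup E]

/-- `m` is an m-bound of `ν` on the closed ball of radius `j`. -/
def HasMBound (ν : E → Set ℝ → ℝ) (j : ℕ) (m : Measure ℝ) : Prop :=
  GoodMeasure m ∧ ∀ y : E, ‖y‖ ≤ (j : ℝ) → TVLE (ν y) m

/-- `l` is an l-bound of `ν` on the closed ball of radius `j`, for the modulus `ω`. -/
def HasLBound (ω : ℝ → ℝ) (ν : E → Set ℝ → ℝ) (j : ℕ) (l : Measure ℝ) : Prop :=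
  GoodMeasure l ∧ ∀ y₁ y₂ : E, ‖y₁‖ ≤ (j : ℝ) → ‖y₂‖ ≤ (j : ℝ) →
    DiffLE (ν y₁) (ν y₂) (ω ‖y₁ - y₂‖) l

/-- A non-decreasing family of moduli of continuity `{ω_j}`. -/
structure IsModulusFamily (ω : ℕ → ℝ → ℝ) : Prop where
  continuousOn : ∀ j, ContinuousOn (ω j) (Ici 0)
  monotoneOn : ∀ j, MonotoneOn (ω j) (Ici 0)
  map_zero : ∀ j, ω j 0 = 0
  nonneg : ∀ j x, 0 ≤ x → 0 ≤ ω j x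
  mono_index : ∀ j x, 0 ≤ x → ω j x ≤ ω (j + 1) x

/-- A parametric b-measure on `E` with respect to the family of moduli `ω`. -/
def IsParamBMeasure (ω : ℕ → ℝ → ℝ) (ν : E → Set ℝ → ℝ) : Prop :=
  (∀ y, IsBMeasure (ν y)) ∧
    ∀ j : ℕ, 1 ≤ j → ∃ m l : Measure ℝ, HasMBound ν j m ∧ HasLBound (ω j) ν j l

/-- A tagged partition of `[a,b]`. -/
structure TaggedPartition (a b : ℝ) where
  k : ℕ
  k_pos : 0 < k
  t : ℕ → ℝ
  tag : ℕ → ℝ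
  left : t 0 = a
  right : t k = b
  lt : ∀ i < k, t i < t (i + 1)
  tag_mem : ∀ i < k, tag i ∈ Set.Icc (t i) (t (i + 1))

/-- The mesh of the tagged partition is `< δ`. -/
def TaggedPartition.MeshLT {a b : ℝ} (P : TaggedPartition a b) (δ : ℝ) : Prop :=
  ∀ i < P.k, P.t (i + 1) - P.t i < δ

/-- The Riemann sum of the parametric b-measure `ν` along the curve `y` over the
tagged partition `P`. -/
def RiemannSum (ν : E → Set ℝ → ℝ) (y : ℝ → E) {a b : ℝ} (P : TaggedPartition a b) : ℝ :=
  ∑ i ∈ Finset.range P.k, ν (y (P.tag i)) (Set.Icc (P.t i) (P.t (i + 1)))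

/-- `L = ∫_a^b dν_{y(s)}` : `L` is the limit of the Riemann sums of `ν` along `y`
over tagged partitions of `[a,b]` as the mesh tends to `0`. -/
def IsCurveIntegral (ν : E → Set ℝ → ℝ) (y : ℝ → E) (a b : ℝ) (L : ℝ) : Prop :=
  ∀ ε > 0, ∃ δ > 0, ∀ P : TaggedPartition a b, P.MeshLT δ → |L - RiemannSum ν y P| < ε

/-- A suitable set of moduli of continuity `Θ = {θ_j^{[q₁,q₂]}}`. -/
structure IsSuitableModuli (Θ : ℕ → ℚ → ℚ → ℝ → ℝ) : Prop where
  continuousOn : ∀ (j : ℕ) (q₁ q₂ : ℚ), q₁ < q₂ → ContinuousOn (Θ j q₁ q₂) (Ici 0)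
  monotoneOn : ∀ (j : ℕ) (q₁ q₂ : ℚ), q₁ < q₂ → MonotoneOn (Θ j q₁ q₂) (Ici 0)
  map_zero : ∀ (j : ℕ) (q₁ q₂ : ℚ), q₁ < q₂ → Θ j q₁ q₂ 0 = 0
  nonneg : ∀ (j : ℕ) (q₁ q₂ : ℚ) (x : ℝ), q₁ < q₂ → 0 ≤ x → 0 ≤ Θ j q₁ q₂ x
  mono : ∀ (j₁ j₂ : ℕ) (q₁ q₂ p₁ p₂ : ℚ), j₁ ≤ j₂ → q₁ ≤ p₁ → p₁ < p₂ → p₂ ≤ q₂ →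
    ∀ x : ℝ, 0 ≤ x → Θ j₁ p₁ p₂ x ≤ Θ j₂ q₁ q₂ x

/-- The set `𝒦_j^I` of continuous functions `y : I → E`, `I = [q₁,q₂]`, bounded by `j`
and admitting `θ_j^I` as modulus of continuity. -/
def KSet (E : Type*) [NormedAddCommGroup E] (Θ : ℕ → ℚ → ℚ → ℝ → ℝ)
    (j : ℕ) (q₁ q₂ : ℚ) : Set (ℝ → E) :=
  {y | ContinuousOn y (Set.Icc (q₁ : ℝ) (q₂ : ℝ)) ∧
    (∀ t ∈ Set.Icc (q₁ : ℝ) (q₂ : ℝ), ‖y t‖ ≤ (j : ℝ)) ∧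
    ∀ t₁ ∈ Set.Icc (q₁ : ℝ) (q₂ : ℝ), ∀ t₂ ∈ Set.Icc (q₁ : ℝ) (q₂ : ℝ),
      ‖y t₁ - y t₂‖ ≤ Θ j q₁ q₂ |t₁ - t₂|}

/-- Convergence `ν_n → ν₀` in the topology `σ_Θ` : the integrals along curves of
`𝒦_j^I` converge uniformly, for every `j` and every compact interval `I` with
rational endpoints. -/
def SigmaThetaTendsto {E : Type*} [NormedAddCommGroup E] (Θ : ℕ → ℚ → ℚ → ℝ → ℝ)
    (ν : ℕ → E → Set ℝ → ℝ) (ν₀ : E → Set ℝ → ℝ) : Prop :=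
  ∀ (j : ℕ) (q₁ q₂ : ℚ), q₁ < q₂ → ∀ ε > 0, ∃ n₀ : ℕ, ∀ n ≥ n₀,
    ∀ y ∈ KSet E Θ j q₁ q₂, ∀ L L₀ : ℝ,
      IsCurveIntegral (ν n) y (q₁ : ℝ) (q₂ : ℝ) L →
      IsCurveIntegral ν₀ y (q₁ : ℝ) (q₂ : ℝ) L₀ → |L - L₀| < ε

/-- The time-translate `ν·t` of a parametric b-measure: `(ν·t)_y(A) = ν_y(A + t)`. -/
def BTranslate (ν : E → Set ℝ → ℝ) (t : ℝ) : E → Set ℝ → ℝ :=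
  fun y A => ν y ((fun s => s + t) '' A)

/-- The time-translate `m·t` of a Borel measure: `(m·t)(A) = m(A + t)`. -/
noncomputable def MTranslate (m : Measure ℝ) (t : ℝ) : Measure ℝ :=
  Measure.map (fun s => s - t) m

/-- An N-dimensional parametric b-measure on `E` with common m-bounds `m j` and
common Lipschitz l-bounds `l j`. -/
def IsNDimParamBMeasure {M : ℕ} (νbar : Fin M → E → Set ℝ → ℝ)
    (m l : ℕ → Measure ℝ) : Prop :=
  (∀ i y, IsBMeasure (νbar i y)) ∧
    ∀ j : ℕ, 1 ≤ j → GoodMeasure (m j) ∧ GoodMeasure (l j) ∧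
      (∀ i, ∀ y : E, ‖y‖ ≤ (j : ℝ) → TVLE (νbar i y) (m j)) ∧
      (∀ i, ∀ y₁ y₂ : E, ‖y₁‖ ≤ (j : ℝ) → ‖y₂‖ ≤ (j : ℝ) →
        DiffLE (νbar i y₁) (νbar i y₂) ‖y₁ - y₂‖ (l j))

/-- The oriented curve integral: `∫_b^a := -∫_a^b`. -/
def IsSignedCurveIntegral (ν : E → Set ℝ → ℝ) (y : ℝ → E) (a b : ℝ) (L : ℝ) : Prop :=
  (a ≤ b ∧ IsCurveIntegral ν y a b L) ∨ (b < a ∧ IsCurveIntegral ν y b a (-L))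

/-- `y` is a solution on `S` of the Cauchy problem `y' = ν̄_y`, `y(t₀) = y₀`, for the
N-dimensional parametric b-measure `ν̄`: componentwise,
`y_i(t) = y_{0,i} + ∫_{t₀}^t dν^i_{y(s)}`. -/
def IsSolutionOn {M : ℕ} (νbar : Fin M → EuclideanSpace ℝ (Fin M) → Set ℝ → ℝ)
    (t₀ : ℝ) (y₀ : EuclideanSpace ℝ (Fin M)) (S : Set ℝ)
    (y : ℝ → EuclideanSpace ℝ (Fin M)) : Prop :=
  t₀ ∈ S ∧ y t₀ = y₀ ∧ ContinuousOn y S ∧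
    ∀ t ∈ S, ∀ i : Fin M, IsSignedCurveIntegral (νbar i) y t₀ t (y t i - y₀ i)

/-- `y` is the maximal (noncontinuable) solution, defined on the open interval `S`:
every solution on an interval containing `t₀` is a restriction of `y`. -/
def IsMaximalSolution {M : ℕ} (νbar : Fin M → EuclideanSpace ℝ (Fin M) → Set ℝ → ℝ)
    (t₀ : ℝ) (y₀ : EuclideanSpace ℝ (Fin M)) (S : Set ℝ)
    (y : ℝ → EuclideanSpace ℝ (Fin M)) : Prop :=
  IsSolutionOn νbar t₀ y₀ S y ∧ IsOpen S ∧ S.OrdConnected ∧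
    ∀ S' : Set ℝ, S'.OrdConnected → ∀ z, IsSolutionOn νbar t₀ y₀ S' z →
      S' ⊆ S ∧ Set.EqOn z y S'

/-! The l-bound controls each term by `ω_j(‖y(τᵢ) - y(τ'ᵢ)‖) · l_j([tᵢ, tᵢ₊₁])`. The first factor is
uniformly small once `|τᵢ - τ'ᵢ|` is, by uniform continuity of `y` on `[a, b]` and continuity of
`ω_j` at `0`; and since `l_j` has no atoms, the second factors add up to `l_j([a, b])`. -/

theorem DiffLE.abs_sub_le {μ₁ μ₂ : Set ℝ → ℝ} {c : ℝ} {l : Measure ℝ} (h : DiffLE μ₁ μ₂ c l)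
    {A : Set ℝ} (hA : Bornology.IsBounded A) (hAm : MeasurableSet A) :
    |μ₁ A - μ₂ A| ≤ c * l.real A := by
  simpa [measureReal_def] using
    h A hA hAm 1 (fun _ => A) ⟨fun _ => hAm, Subsingleton.pairwise, iUnion_const A⟩

theorem measure_Icc_add_Icc (μ : Measure ℝ) [NullSingletonClass μ] {a b c : ℝ} (hab : a ≤ b)
    (hbc : b ≤ c) :
    μ (Icc a b) + μ (Icc b c) = μ (Icc a c) := by
  simp only [← measure_congr (Ico_ae_eq_Icc (μ := μ))]
  rw [← measure_union Ico_disjoint_Ico_same measurableSet_Ico, Ico_union_Ico_eq_Ico hab hbc]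

theorem sum_measure_Icc_succ (μ : Measure ℝ) [NullSingletonClass μ] {t : ℕ → ℝ} {k : ℕ}
    (ht : MonotoneOn t (Iic k)) :
    ∑ i ∈ Finset.range k, μ (Icc (t i) (t (i + 1))) = μ (Icc (t 0) (t k)) := by
  induction k with
  | zero => simp
  | succ k ih =>
    rw [Finset.sum_range_succ, ih (ht.mono (Iic_subset_Iic.2 k.le_succ))]
    exact measure_Icc_add_Icc μ (ht (Nat.zero_le _) (by simp) (Nat.zero_le _))
      (ht (by simp) (by simp) k.le_succ)

theorem sum_measureReal_Icc_succ (μ : Measure ℝ) [NullSingletonClass μ]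
    [IsLocallyFiniteMeasure μ] {t : ℕ → ℝ} {k : ℕ} (ht : MonotoneOn t (Iic k)) :
    ∑ i ∈ Finset.range k, μ.real (Icc (t i) (t (i + 1))) = μ.real (Icc (t 0) (t k)) := by
  simp only [measureReal_def]
  rw [← ENNReal.toReal_sum (fun _ _ => measure_Icc_lt_top.ne), sum_measure_Icc_succ μ ht]

theorem abs_sum_sub_le_of_diffLE {μ μ' : ℕ → Set ℝ → ℝ} {c : ℕ → ℝ} {c₀ : ℝ} {l : Measure ℝ}
    [NullSingletonClass l] [IsLocallyFiniteMeasure l] {t : ℕ → ℝ} {k : ℕ}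
    (ht : MonotoneOn t (Iic k)) (hμ : ∀ i < k, DiffLE (μ i) (μ' i) (c i) l)
    (hc : ∀ i < k, c i ≤ c₀) :
    |∑ i ∈ Finset.range k, (μ i (Icc (t i) (t (i + 1))) - μ' i (Icc (t i) (t (i + 1))))|
      ≤ c₀ * l.real (Icc (t 0) (t k)) := by
  rw [← sum_measureReal_Icc_succ l ht, Finset.mul_sum]
  refine (Finset.abs_sum_le_sum_abs _ _).trans (Finset.sum_le_sum fun i hi => ?_)
  rw [Finset.mem_range] at hi
  exact ((hμ i hi).abs_sub_le (Metric.isBounded_Icc _ _) measurableSet_Icc).trans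
    (mul_le_mul_of_nonneg_right (hc i hi) measureReal_nonneg)

theorem UniformContinuousOn.exists_pos_forall_comp_norm_sub_lt {s : Set ℝ} {y : ℝ → E}
    (hy : UniformContinuousOn y s) {ω : ℝ → ℝ} (hω : ContinuousWithinAt ω (Ici 0) 0)
    (hω0 : ω 0 = 0) {η : ℝ} (hη : 0 < η) :
    ∃ δ > 0, ∀ τ ∈ s, ∀ τ' ∈ s, |τ - τ'| < δ → ω ‖y τ - y τ'‖ < η := by
  obtain ⟨ρ, hρ, hρω⟩ :=
    Metric.mem_nhdsWithin_iff.1 (hω.eventually_lt_const (hω0.symm ▸ hη))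
  obtain ⟨δ, hδ, hδy⟩ := Metric.uniformContinuousOn_iff.1 hy ρ hρ
  refine ⟨δ, hδ, fun τ hτ τ' hτ' hττ' => hρω ⟨?_, norm_nonneg _⟩⟩
  simpa [dist_eq_norm] using hδy τ hτ τ' hτ' (by rwa [Real.dist_eq])

theorem stmt0_general {N : ℕ} (ω : ℕ → ℝ → ℝ) (hω : IsModulusFamily ω)
    (ν : EuclideanSpace ℝ (Fin N) → Set ℝ → ℝ) (hν : IsParamBMeasure ω ν)
    (a b : ℝ) (y : ℝ → EuclideanSpace ℝ (Fin N))
    (hy : ContinuousOn y (Set.Icc a b)) :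
    ∀ ε > 0, ∃ δ > 0, ∀ k : ℕ, 0 < k → ∀ t : ℕ → ℝ, t 0 = a → t k = b →
      (∀ i < k, t i < t (i + 1)) →
      ∀ τ τ' : ℕ → ℝ, (∀ i < k, τ i ∈ Set.Icc a b) → (∀ i < k, τ' i ∈ Set.Icc a b) →
        (∀ i < k, |τ i - τ' i| < δ) →
        |∑ i ∈ Finset.range k,
            (ν (y (τ i)) (Set.Icc (t i) (t (i + 1))) -
              ν (y (τ' i)) (Set.Icc (t i) (t (i + 1))))| < ε := by
  intro ε hε
  obtain ⟨R, hR⟩ := isCompact_Icc.exists_bound_of_continuousOn hy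
  obtain ⟨j, hj⟩ := exists_nat_ge (max R 1)
  obtain ⟨-, l, -, ⟨hl_fin, hl_atom⟩, hl⟩ :=
    hν.2 j (by exact_mod_cast (le_max_right _ _).trans hj)
  have : NullSingletonClass l := ⟨hl_atom⟩
  have hyj : ∀ s ∈ Icc a b, ‖y s‖ ≤ j := fun s hs => (hR s hs).trans ((le_max_left _ _).trans hj)
  set C := l.real (Icc a b)
  have hη : 0 < ε / (C + 1) := by positivity
  obtain ⟨δ, hδ, hωy⟩ :=
    (isCompact_Icc.uniformContinuousOn_of_continuous hy).exists_pos_forall_comp_norm_sub_lt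
      (hω.continuousOn j 0 self_mem_Ici) (hω.map_zero j) hη
  refine ⟨δ, hδ, fun k _ t ht0 htk hlt τ τ' hτ hτ' hττ' => ?_⟩
  have ht : MonotoneOn t (Iic k) := monotoneOn_of_le_add_one ordConnected_Iic
    fun i _ _ hi => (hlt i hi).le
  calc _ ≤ ε / (C + 1) * l.real (Icc (t 0) (t k)) :=
        abs_sum_sub_le_of_diffLE ht (fun i hi => hl _ _ (hyj _ (hτ i hi)) (hyj _ (hτ' i hi)))
          fun i hi => (hωy _ (hτ i hi) _ (hτ' i hi) (hττ' i hi)).le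
    _ = ε * (C / (C + 1)) := by rw [ht0, htk]; ring
    _ < ε := mul_lt_of_lt_one_right hε ((div_lt_one (by positivity)).2 (lt_add_one C))

theorem stmt0 {N : ℕ} (ω : ℕ → ℝ → ℝ) (hω : IsModulusFamily ω)
    (ν : EuclideanSpace ℝ (Fin N) → Set ℝ → ℝ) (hν : IsParamBMeasure ω ν)
    (a b : ℝ) (hab : a ≤ b) (y : ℝ → EuclideanSpace ℝ (Fin N))
    (hy : ContinuousOn y (Set.Icc a b)) :
    ∀ ε > 0, ∃ δ > 0, ∀ k : ℕ, 0 < k → ∀ t : ℕ → ℝ, t 0 = a → t k = b →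
      (∀ i < k, t i < t (i + 1)) →
      ∀ τ τ' : ℕ → ℝ, (∀ i < k, τ i ∈ Set.Icc a b) → (∀ i < k, τ' i ∈ Set.Icc a b) →
        (∀ i < k, |τ i - τ' i| < δ) →
        |∑ i ∈ Finset.range k,
            (ν (y (τ i)) (Set.Icc (t i) (t (i + 1))) -
              ν (y (τ' i)) (Set.Icc (t i) (t (i + 1))))| < ε :=
  stmt0_general ω hω ν hν a b y hy
end

section
/- Let μ⁺ and μ⁻ be locally finite atomless Borel measures on ℝ and let ν₀ be the b-measure ν₀(A) = μ⁺(A) − μ⁻(A) for bounded Borel A; suppose |ν₀| ≤ m₀ for some locally finite atomless Borel measure m₀. Let φ : ℝ^N → [0,1] be of class C¹ with compact support, let ν* be the parametric b-measure y ↦ φ(y)ν₀, and let y : [a,b] → ℝ^N be continuous. Then ν* is integrable along y and ∫_a^b dν*_{y(s)} = ∫_{[a,b]} φ(y(s)) dμ⁺(s) − ∫_{[a,b]} φ(y(s)) dμ⁻(s), where the right-hand integrals are Lebesgue integrals. -/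
open MeasureTheory Set Filter Topology

variable {E : Type*} [NormedAddCommGroup E]

/-!
On each cell `(tᵢ, tᵢ₊₁]` of a fine tagged partition the continuous function `φ ∘ y` stays
uniformly close to its value at the tag, so the Riemann–Stieltjes sum
`∑ φ(y(τᵢ)) μ([tᵢ, tᵢ₊₁])` is close to `∫_{[a,b]} φ ∘ y dμ` for each of `μ = μ⁺, μ⁻`; the
closed cells may be used in place of the half-open ones because `μ` has no atoms.
The two limits are then subtracted.
-/

namespace TaggedPartition

theorem t_mono {a b : ℝ} (P : TaggedPartition a b) {i j : ℕ} (hij : i ≤ j) (hj : j ≤ P.k) :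
    P.t i ≤ P.t j := by
  induction j, hij using Nat.le_induction with
  | base => rfl
  | succ j _ ih => exact (ih (by omega)).trans (P.lt j (by omega)).le

theorem le {a b : ℝ} (P : TaggedPartition a b) : a ≤ b := by
  simpa only [P.left, P.right] using P.t_mono (Nat.zero_le P.k) le_rfl

theorem Icc_subset {a b : ℝ} (P : TaggedPartition a b) {i : ℕ} (hi : i < P.k) :
    Icc (P.t i) (P.t (i + 1)) ⊆ Icc a b := by
  have ha := P.t_mono (Nat.zero_le i) hi.le
  have hb := P.t_mono hi le_rfl
  rw [P.left] at ha
  rw [P.right] at hb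
  exact Icc_subset_Icc ha hb

theorem sum_setIntegral_Ioc {a b : ℝ} (P : TaggedPartition a b) {μ : Measure ℝ} {g : ℝ → ℝ}
    (hg : IntegrableOn g (Icc a b) μ) :
    ∑ i ∈ Finset.range P.k, ∫ s in Ioc (P.t i) (P.t (i + 1)), g s ∂μ =
      ∫ s in Ioc a b, g s ∂μ := by
  have hle : ∀ i < P.k, P.t i ≤ P.t (i + 1) := fun i hi => (P.lt i hi).le
  calc ∑ i ∈ Finset.range P.k, ∫ s in Ioc (P.t i) (P.t (i + 1)), g s ∂μ
      = ∑ i ∈ Finset.range P.k, ∫ s in P.t i..P.t (i + 1), g s ∂μ :=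
        Finset.sum_congr rfl fun i hi =>
          (intervalIntegral.integral_of_le (hle i (Finset.mem_range.1 hi))).symm
    _ = ∫ s in P.t 0..P.t P.k, g s ∂μ :=
        intervalIntegral.sum_integral_adjacent_intervals fun i hi =>
          (intervalIntegrable_iff_integrableOn_Ioc_of_le (hle i hi)).2
            (hg.mono_set (Ioc_subset_Icc_self.trans (P.Icc_subset hi)))
    _ = ∫ s in Ioc a b, g s ∂μ := by
        rw [P.left, P.right, intervalIntegral.integral_of_le P.le]

end TaggedPartition

theorem abs_setIntegral_sub_mul_measureReal_le {α : Type*} [MeasurableSpace α]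
    {μ : Measure α} {s : Set α} {g : α → ℝ} {c η : ℝ} (hs : μ s < ⊤)
    (hg : IntegrableOn g s μ) (hη : ∀ x ∈ s, |g x - c| ≤ η) :
    |∫ x in s, g x ∂μ - c * μ.real s| ≤ η * μ.real s := by
  have hsub : ∫ x in s, (g x - c) ∂μ = ∫ x in s, g x ∂μ - c * μ.real s := by
    rw [integral_sub hg (integrableOn_const hs.ne), setIntegral_const, smul_eq_mul, mul_comm]
  rw [← hsub]
  exact norm_setIntegral_le_of_norm_le_const hs fun x hx =>
    (Real.norm_eq_abs _).trans_le (hη x hx)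

theorem IsCurveIntegral.sub {X : Type*} {ν₁ ν₂ : X → Set ℝ → ℝ} {y : ℝ → X} {a b L₁ L₂ : ℝ}
    (h₁ : IsCurveIntegral ν₁ y a b L₁) (h₂ : IsCurveIntegral ν₂ y a b L₂) :
    IsCurveIntegral (fun z A => ν₁ z A - ν₂ z A) y a b (L₁ - L₂) := by
  intro ε hε
  obtain ⟨δ₁, hδ₁, h₁⟩ := h₁ (ε / 2) (half_pos hε)
  obtain ⟨δ₂, hδ₂, h₂⟩ := h₂ (ε / 2) (half_pos hε)
  refine ⟨min δ₁ δ₂, lt_min hδ₁ hδ₂, fun P hP => ?_⟩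
  specialize h₁ P fun i hi => (hP i hi).trans_le (min_le_left _ _)
  specialize h₂ P fun i hi => (hP i hi).trans_le (min_le_right _ _)
  have hsum : RiemannSum (fun z A => ν₁ z A - ν₂ z A) y P =
      RiemannSum ν₁ y P - RiemannSum ν₂ y P :=
    Finset.sum_sub_distrib _ _
  calc |L₁ - L₂ - RiemannSum (fun z A => ν₁ z A - ν₂ z A) y P|
      = |(L₁ - RiemannSum ν₁ y P) - (L₂ - RiemannSum ν₂ y P)| := by rw [hsum]; ring_nf
    _ ≤ |L₁ - RiemannSum ν₁ y P| + |L₂ - RiemannSum ν₂ y P| := abs_sub _ _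
    _ < ε := by linarith

theorem isCurveIntegral_mul_measure {X : Type*} (μ : Measure ℝ) [IsLocallyFiniteMeasure μ]
    [NullSingletonClass μ] (f : X → ℝ) (y : ℝ → X) {a b : ℝ}
    (hfy : ContinuousOn (fun s => f (y s)) (Icc a b)) :
    IsCurveIntegral (fun z A => f z * (μ A).toReal) y a b (∫ s in Icc a b, f (y s) ∂μ) := by
  intro ε hε
  set C := μ.real (Icc a b) + 1
  have hC : 0 < C := by positivity
  obtain ⟨δ, hδ, hclose⟩ := Metric.uniformContinuousOn_iff.1
    (isCompact_Icc.uniformContinuousOn_of_continuous hfy) (ε / C) (div_pos hε hC)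
  refine ⟨δ, hδ, fun P hP => ?_⟩
  have hfin : μ (Icc a b) < ⊤ := isCompact_Icc.measure_lt_top
  have hint : IntegrableOn (fun s => f (y s)) (Icc a b) μ := hfy.integrableOn_Icc
  have hcell : ∀ i < P.k,
      |∫ s in Ioc (P.t i) (P.t (i + 1)), f (y s) ∂μ
          - f (y (P.tag i)) * μ.real (Icc (P.t i) (P.t (i + 1)))|
        ≤ ε / C * μ.real (Ioc (P.t i) (P.t (i + 1))) := by
    intro i hi
    have hsub := Ioc_subset_Icc_self.trans (P.Icc_subset hi)
    rw [← measureReal_congr Ioc_ae_eq_Icc]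
    refine abs_setIntegral_sub_mul_measureReal_le
      ((measure_mono hsub).trans_lt hfin) (hint.mono_set hsub)
      fun s hs => (hclose s (hsub hs) _ (P.Icc_subset hi (P.tag_mem i hi)) ?_).le
    have htag := P.tag_mem i hi
    rw [Real.dist_eq, abs_sub_lt_iff]
    constructor <;> linarith [hs.1, hs.2, htag.1, htag.2, hP i hi]
  have hcells :
      ∑ i ∈ Finset.range P.k, μ.real (Ioc (P.t i) (P.t (i + 1))) = μ.real (Ioc a b) := by
    simpa using P.sum_setIntegral_Ioc (μ := μ) (g := fun _ => 1)
      continuousOn_const.integrableOn_Icc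
  calc |∫ s in Icc a b, f (y s) ∂μ - RiemannSum (fun z A => f z * (μ A).toReal) y P|
      = |∑ i ∈ Finset.range P.k, (∫ s in Ioc (P.t i) (P.t (i + 1)), f (y s) ∂μ
          - f (y (P.tag i)) * μ.real (Icc (P.t i) (P.t (i + 1))))| := by
        rw [integral_Icc_eq_integral_Ioc, ← P.sum_setIntegral_Ioc hint, Finset.sum_sub_distrib]
        rfl
    _ ≤ ∑ i ∈ Finset.range P.k, ε / C * μ.real (Ioc (P.t i) (P.t (i + 1))) :=
        (Finset.abs_sum_le_sum_abs _ _).trans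
          (Finset.sum_le_sum fun i hi => hcell i (Finset.mem_range.1 hi))
    _ = ε / C * μ.real (Ioc a b) := by rw [← Finset.mul_sum, hcells]
    _ ≤ ε / C * μ.real (Icc a b) := by gcongr; exacts [hfin.ne, Ioc_subset_Icc_self]
    _ < ε := by
        rw [div_mul_eq_mul_div, div_lt_iff₀ hC]
        nlinarith [measureReal_nonneg (μ := μ) (s := Icc a b)]

theorem stmt3_general {N : ℕ} (μp μm : Measure ℝ) (hμp : GoodMeasure μp) (hμm : GoodMeasure μm)
    (φ : EuclideanSpace ℝ (Fin N) → ℝ)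
    (hφC1 : ContDiff ℝ 1 φ)
    (a b : ℝ) (y : ℝ → EuclideanSpace ℝ (Fin N))
    (hy : ContinuousOn y (Set.Icc a b)) :
    IsCurveIntegral (fun z A => φ z * ((μp A).toReal - (μm A).toReal)) y a b
      ((∫ s in Set.Icc a b, φ (y s) ∂μp) - ∫ s in Set.Icc a b, φ (y s) ∂μm) := by
  have := hμp.1
  have := hμm.1
  have : NullSingletonClass μp := ⟨hμp.2⟩
  have : NullSingletonClass μm := ⟨hμm.2⟩
  have hφy : ContinuousOn (fun s => φ (y s)) (Icc a b) := hφC1.continuous.comp_continuousOn hy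
  simpa only [mul_sub] using
    (isCurveIntegral_mul_measure μp φ y hφy).sub (isCurveIntegral_mul_measure μm φ y hφy)

theorem stmt3 {N : ℕ} (μp μm : Measure ℝ) (hμp : GoodMeasure μp) (hμm : GoodMeasure μm)
    (m₀ : Measure ℝ) (hm₀ : GoodMeasure m₀)
    (hTV : TVLE (fun A => (μp A).toReal - (μm A).toReal) m₀)
    (φ : EuclideanSpace ℝ (Fin N) → ℝ)
    (hφ01 : ∀ y, φ y ∈ Set.Icc (0 : ℝ) 1)
    (hφC1 : ContDiff ℝ 1 φ) (hφsupp : HasCompactSupport φ)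
    (a b : ℝ) (hab : a ≤ b) (y : ℝ → EuclideanSpace ℝ (Fin N))
    (hy : ContinuousOn y (Set.Icc a b)) :
    IsCurveIntegral (fun z A => φ z * ((μp A).toReal - (μm A).toReal)) y a b
      ((∫ s in Set.Icc a b, φ (y s) ∂μp) - ∫ s in Set.Icc a b, φ (y s) ∂μm) :=
  stmt3_general μp μm hμp hμm φ hφC1 a b y hy
end

section
/- Let D be a countable dense subset of ℝ^N and let {ν_n}_{n≥1} be a sequence of parametric b-measures on ℝ^N with respect to {ω_j}_{j≥1} whose m-bounds can be chosen so that, for each j ≥ 1, the family {m_j^n : n ≥ 1} is equicontinuous, i.e., for every ε > 0 there is δ > 0 with m_j^n([s,t]) < ε whenever 0 ≤ t − s < δ, for all n ≥ 1. Suppose ν_n converges in σ_D to a parametric b-measure μ, that is, (ν_n)_y(I) → μ_y(I) for every y ∈ D and every compact interval I with rational endpoints. Then μ admits, for each j ≥ 1, an m-bound m_j such that for every ε > 0 there is δ > 0 with m_j([s,t]) < ε whenever s, t ∈ ℝ satisfy 0 ≤ t − s < δ. The analogous statement holds for l-bounds. -/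
open MeasureTheory Set Filter Topology

variable {E : Type*} [NormedAddCommGroup E]

/-!
Along an ultrafilter on `ℕ`, the distribution functions of the equicontinuous bounds `m_j^n`
converge pointwise; the limit inherits their common modulus of continuity, so it is the
distribution function of an atomless equicontinuous Stieltjes measure `κ`. Passing to the limit in
`|(ν_n)_y(I)| ≤ m_j^n(I)` gives `|μ_y(I)| ≤ κ(I)` for `y ∈ D` and rational intervals `I`, and the
continuity of `y ↦ μ_y(I)` given by the l-bounds of `μ` extends this to the whole ball. Finite
unions of rational intervals approximate every bounded Borel set up to small measure for
`κ + m_j`, where `m_j` is any m-bound of `μ`, which upgrades the interval estimate to `|μ_y| ≤ κ`.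
The l-bounds are obtained the same way from `μ_{y₁} - μ_{y₂}` and `ω_j(|y₁ - y₂|) κ`.
-/

open MeasureTheory Set Filter Topology Bornology
open scoped symmDiff

instance {α : Type*} [TopologicalSpace α] [MeasurableSpace α] (μ ν : Measure α)
    [IsFiniteMeasureOnCompacts μ] [IsFiniteMeasureOnCompacts ν] :
    IsFiniteMeasureOnCompacts (μ + ν) :=
  ⟨fun _ hK => by
    rw [Measure.add_apply]
    exact ENNReal.add_lt_top.2 ⟨hK.measure_lt_top, hK.measure_lt_top⟩⟩

def boundedMeasurableSets : Set (Set ℝ) := {s | MeasurableSet s ∧ IsBounded s}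

lemma isSetRing_boundedMeasurableSets : IsSetRing boundedMeasurableSets where
  empty_mem := ⟨.empty, isBounded_empty⟩
  union_mem _ _ hs ht := ⟨hs.1.union ht.1, hs.2.union ht.2⟩
  sdiff_mem _ _ hs ht := ⟨hs.1.diff ht.1, hs.2.subset sdiff_subset⟩

lemma Icc_mem_boundedMeasurableSets (a b : ℝ) : Icc a b ∈ boundedMeasurableSets :=
  ⟨measurableSet_Icc, Metric.isBounded_Icc a b⟩

namespace IsBMeasure

variable {φ ψ : Set ℝ → ℝ}

lemma union_eq_add (hφ : IsBMeasure φ) {s t : Set ℝ} (hs : s ∈ boundedMeasurableSets)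
    (ht : t ∈ boundedMeasurableSets) (hst : Disjoint s t) : φ (s ∪ t) = φ s + φ t := by
  classical
  let A : ℕ → Set ℝ := fun n => if n = 0 then s else if n = 1 then t else ∅
  have hA : ∀ n, A n ∈ boundedMeasurableSets := fun n => by
    dsimp only [A]; split_ifs
    exacts [hs, ht, isSetRing_boundedMeasurableSets.empty_mem]
  have hUnion : ⋃ n, A n = s ∪ t := by
    refine subset_antisymm (iUnion_subset fun n => ?_)
      (union_subset (subset_iUnion A 0) (subset_iUnion A 1))
    dsimp only [A]; split_ifs
    exacts [subset_union_left, subset_union_right, empty_subset _]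
  have hdisj : Pairwise (Function.onFun Disjoint A) := by
    intro m n hmn
    simp only [Function.onFun, A]
    split_ifs <;> first | omega | simp [hst.symm]
  have hsum := hφ.countably_additive A (fun n => (hA n).1) (fun n => (hA n).2) hdisj
    (hUnion ▸ hs.2.union ht.2)
  rw [hUnion] at hsum
  have hfin : HasSum (fun n => φ (A n)) (∑ n ∈ Finset.range 2, φ (A n)) :=
    hasSum_sum_of_ne_finset_zero fun n hn => by
      simp only [Finset.mem_range, not_lt] at hn
      simp [A, show n ≠ 0 by omega, show n ≠ 1 by omega, hφ.empty]
  simpa [A, Finset.sum_range_succ] using hsum.unique hfin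

def toAddContent (hφ : IsBMeasure φ) : AddContent ℝ boundedMeasurableSets :=
  isSetRing_boundedMeasurableSets.addContent_of_union φ hφ.empty hφ.union_eq_add

lemma sub (hφ : IsBMeasure φ) (hψ : IsBMeasure ψ) : IsBMeasure (φ - ψ) where
  empty := by simp [hφ.empty, hψ.empty]
  countably_additive A hm hb hd hU :=
    (hφ.countably_additive A hm hb hd hU).sub (hψ.countably_additive A hm hb hd hU)
  singleton t := by simp [hφ.singleton, hψ.singleton]

lemma apply_Ioc (hφ : IsBMeasure φ) (a b : ℝ) : φ (Ioc a b) = φ (Icc a b) := by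
  rcases le_or_gt a b with hab | hab
  · rw [← Ioc_insert_left hab, insert_eq, hφ.union_eq_add ⟨measurableSet_singleton a,
      isBounded_singleton⟩ ⟨measurableSet_Ioc, Metric.isBounded_Ioc a b⟩ (by simp), hφ.singleton,
      zero_add]
  · rw [Ioc_eq_empty (not_lt.2 hab.le), Icc_eq_empty (not_le.2 hab)]

lemma sub_eq_sdiff_sub_sdiff (hφ : IsBMeasure φ) {s t : Set ℝ}
    (hs : s ∈ boundedMeasurableSets) (ht : t ∈ boundedMeasurableSets) :
    φ s - φ t = φ (s \ t) - φ (t \ s) := by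
  have hR := isSetRing_boundedMeasurableSets
  have key : ∀ {s t}, s ∈ boundedMeasurableSets → t ∈ boundedMeasurableSets →
      φ s = φ (s ∩ t) + φ (s \ t) := fun hs ht => by
    rw [← hφ.union_eq_add (hR.inter_mem hs ht) (hR.sdiff_mem hs ht) disjoint_sdiff_inter.symm,
      inter_union_sdiff]
  rw [key hs ht, key ht hs, inter_comm]
  ring

end IsBMeasure

lemma IsBorelPartition.single {s : Set ℝ} (hs : MeasurableSet s) :
    IsBorelPartition s (fun _ : Fin 1 => s) :=
  ⟨fun _ => hs, Subsingleton.pairwise, iUnion_const s⟩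

section TVLE

variable {φ ψ : Set ℝ → ℝ} {m m' : Measure ℝ}

lemma TVLE.abs_le (h : TVLE φ m) {s : Set ℝ} (hs : s ∈ boundedMeasurableSets) :
    |φ s| ≤ (m s).toReal := by
  simpa using h s hs.2 hs.1 1 _ (.single hs.1)

lemma DiffLE.abs_sub_le_s8 {c : ℝ} (h : DiffLE φ ψ c m) {s : Set ℝ}
    (hs : s ∈ boundedMeasurableSets) : |φ s - ψ s| ≤ c * (m s).toReal := by
  simpa using h s hs.2 hs.1 1 _ (.single hs.1)

lemma TVLE.of_abs_le [IsFiniteMeasureOnCompacts m]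
    (h : ∀ s ∈ boundedMeasurableSets, |φ s| ≤ (m s).toReal) : TVLE φ m := by
  rintro _ hA - n P ⟨hPm, hPd, rfl⟩
  have hPb : ∀ i, IsBounded (P i) := fun i => hA.subset (subset_iUnion P i)
  calc ∑ i, |φ (P i)| ≤ ∑ i, (m (P i)).toReal :=
        Finset.sum_le_sum fun i _ => h _ ⟨hPm i, hPb i⟩
    _ = (m (⋃ i, P i)).toReal := by
        rw [measure_iUnion hPd hPm, tsum_fintype,
          ENNReal.toReal_sum fun i _ => (hPb i).measure_lt_top.ne]

lemma TVLE.sub [IsFiniteMeasureOnCompacts m] [IsFiniteMeasureOnCompacts m'] (hφ : TVLE φ m)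
    (hψ : TVLE ψ m') : TVLE (φ - ψ) (m + m') := by
  intro A hAb hAm n P hP
  rw [Measure.add_apply, ENNReal.toReal_add hAb.measure_lt_top.ne hAb.measure_lt_top.ne]
  calc ∑ i, |(φ - ψ) (P i)| ≤ ∑ i, (|φ (P i)| + |ψ (P i)|) :=
        Finset.sum_le_sum fun i _ => abs_sub _ _
    _ ≤ _ := Finset.sum_add_distrib.trans_le
        (add_le_add (hφ A hAb hAm n P hP) (hψ A hAb hAm n P hP))

lemma DiffLE.of_tvle {c : ℝ} (hc : 0 ≤ c) (h : TVLE (φ - ψ) (ENNReal.ofReal c • m)) :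
    DiffLE φ ψ c m := by
  intro A hAb hAm n P hP
  simpa [ENNReal.toReal_ofReal hc] using h A hAb hAm n P hP

lemma TVLE.abs_sub_le_s8 [IsFiniteMeasureOnCompacts m] (hφ : IsBMeasure φ) (h : TVLE φ m)
    {s t : Set ℝ} (hs : s ∈ boundedMeasurableSets) (ht : t ∈ boundedMeasurableSets) :
    |φ s - φ t| ≤ (m (s ∆ t)).toReal := by
  have hR := isSetRing_boundedMeasurableSets
  rw [hφ.sub_eq_sdiff_sub_sdiff hs ht, Set.symmDiff_def,
    measure_union disjoint_sdiff_sdiff (ht.1.diff hs.1),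
    ENNReal.toReal_add (hs.2.subset sdiff_subset).measure_lt_top.ne
      (ht.2.subset sdiff_subset).measure_lt_top.ne]
  exact (abs_sub _ _).trans
    (add_le_add (h.abs_le (hR.sdiff_mem hs ht)) (h.abs_le (hR.sdiff_mem ht hs)))

end TVLE

def ratIocs : Set (Set ℝ) := {s | ∃ u v : ℚ, s = Ioc (u : ℝ) v}

lemma isSetSemiring_ratIocs : IsSetSemiring ratIocs where
  empty_mem := ⟨0, 0, by simp⟩
  inter_mem := by
    rintro _ ⟨u, v, rfl⟩ _ ⟨u', v', rfl⟩
    exact ⟨max u u', min v v', by push_cast; exact Ioc_inter_Ioc⟩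
  sdiff_eq_sUnion' := by
    classical
    rintro _ ⟨u, v, rfl⟩ _ ⟨u', v', rfl⟩
    refine ⟨{Ioc (u : ℝ) (min v u' : ℚ), Ioc ((max u (max u' v') : ℚ) : ℝ) v}, ?_, ?_, ?_⟩
    · simp only [Finset.coe_insert, Finset.coe_singleton, insert_subset_iff,
        singleton_subset_iff]
      exact ⟨⟨_, _, rfl⟩, ⟨_, _, rfl⟩⟩
    · simp only [Finset.coe_insert, Finset.coe_singleton]
      refine PairwiseDisjoint.insert (pairwiseDisjoint_singleton _ _) fun t ht _ => ?_
      rw [mem_singleton_iff.1 ht]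
      refine Set.disjoint_left.2 fun x hx hy => ?_
      simp only [id, mem_Ioc] at hx hy
      push_cast at hx hy
      grind
    · ext x
      simp only [Finset.coe_insert, Finset.coe_singleton, sUnion_insert, sUnion_singleton,
        Set.mem_sdiff, mem_Ioc, mem_union]
      push_cast
      grind

lemma measurableSpace_eq_generateFrom_ratIocs :
    (inferInstance : MeasurableSpace ℝ) = MeasurableSpace.generateFrom ratIocs := by
  refine le_antisymm ?_ (MeasurableSpace.generateFrom_le ?_)
  · rw [BorelSpace.measurable_eq (α := ℝ), Rat.denseRange_cast.borel_eq_generateFrom_Ioc_mem]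
    refine MeasurableSpace.generateFrom_mono ?_
    rintro _ ⟨_, ⟨u, rfl⟩, _, ⟨v, rfl⟩, -, rfl⟩
    exact ⟨u, v, rfl⟩
  · rintro _ ⟨u, v, rfl⟩
    exact measurableSet_Ioc

lemma supClosure_ratIocs_subset : supClosure ratIocs ⊆ boundedMeasurableSets := by
  refine supClosure_min ?_ fun s hs t ht => isSetRing_boundedMeasurableSets.union_mem hs ht
  rintro _ ⟨u, v, rfl⟩
  exact ⟨measurableSet_Ioc, Metric.isBounded_Ioc _ _⟩

lemma exists_ratIoc_superset {s : Set ℝ} (hs : IsBounded s) : ∃ u v : ℚ, s ⊆ Ioc (u : ℝ) v := by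
  obtain ⟨R, hR⟩ := hs.subset_closedBall 0
  obtain ⟨q, hq⟩ := exists_rat_gt R
  refine ⟨-q, q, fun x hx => ?_⟩
  have hx := abs_le.1 (mem_closedBall_zero_iff.1 (hR hx))
  push_cast
  constructor <;> linarith [hx.1, hx.2]

namespace IsBMeasure

variable {φ : Set ℝ → ℝ} {ρ κ : Measure ℝ}

lemma abs_le_of_mem_supClosure (hφ : IsBMeasure φ) [IsFiniteMeasureOnCompacts κ]
    (h : ∀ u v : ℚ, u < v → |φ (Ioc u v)| ≤ (κ (Ioc u v)).toReal) {t : Set ℝ}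
    (ht : t ∈ supClosure ratIocs) : |φ t| ≤ (κ t).toReal := by
  obtain ⟨P, hP⟩ := isSetSemiring_ratIocs.mem_supClosure_iff.1 ht
  have hPb : ∀ p ∈ P.parts, p ∈ boundedMeasurableSets := fun p hp =>
    supClosure_ratIocs_subset (subset_supClosure (hP hp))
  have ht_eq : t = ⋃ p ∈ P.parts, p := by
    rw [← Finset.set_biUnion_coe, ← sUnion_eq_biUnion, ← Finset.sup_id_set_eq_sUnion,
      P.sup_parts]
  have hφt : φ (⋃ p ∈ P.parts, p) = ∑ p ∈ P.parts, φ p :=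
    addContent_biUnion_eq (m := hφ.toAddContent) isSetRing_boundedMeasurableSets hPb P.disjoint
  have hκt : κ (⋃ p ∈ P.parts, p) = ∑ p ∈ P.parts, κ p :=
    measure_biUnion_finset P.disjoint fun p hp => (hPb p hp).1
  rw [← ht_eq] at hφt hκt
  rw [hφt, hκt, ENNReal.toReal_sum fun p hp => (hPb p hp).2.measure_lt_top.ne]
  refine (Finset.abs_sum_le_sum_abs _ _).trans (Finset.sum_le_sum fun p hp => ?_)
  obtain ⟨u, v, rfl⟩ := hP hp
  rcases lt_or_ge u v with huv | huv
  · exact h u v huv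
  · simp [Ioc_eq_empty (not_lt.2 (Rat.cast_le.2 huv)), hφ.empty]

lemma abs_le_add_of_symmDiff (hφ : IsBMeasure φ) [IsFiniteMeasureOnCompacts ρ]
    [IsFiniteMeasureOnCompacts κ] (hρ : TVLE φ ρ) {s t : Set ℝ}
    (hs : s ∈ boundedMeasurableSets) (ht : t ∈ boundedMeasurableSets)
    (hφt : |φ t| ≤ (κ t).toReal) : |φ s| ≤ (κ s).toReal + ((ρ + κ) (t ∆ s)).toReal := by
  have hfin : ∀ {m : Measure ℝ} [IsFiniteMeasureOnCompacts m], m (t ∆ s) ≠ ⊤ :=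
    (ht.2.union hs.2).subset symmDiff_subset_union |>.measure_lt_top.ne
  have hκ : (κ t).toReal ≤ (κ s).toReal + (κ (t ∆ s)).toReal := by
    have hκs : κ s ≠ ⊤ := hs.2.measure_lt_top.ne
    rw [← ENNReal.toReal_add hκs hfin]
    refine ENNReal.toReal_mono (ENNReal.add_ne_top.2 ⟨hκs, hfin⟩) <|
      (measure_mono fun x hx => ?_).trans (measure_union_le s (t ∆ s))
    by_cases hxs : x ∈ s
    · exact Or.inl hxs
    · exact Or.inr (Or.inl ⟨hx, hxs⟩)
  have hρ' := hρ.abs_sub_le_s8 hφ hs ht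
  rw [symmDiff_comm] at hρ'
  rw [Measure.add_apply, ENNReal.toReal_add hfin hfin]
  linarith [abs_sub_abs_le_abs_sub (φ s) (φ t)]

lemma tvle_of_abs_Ioc_le (hφ : IsBMeasure φ) [IsFiniteMeasureOnCompacts ρ]
    [IsFiniteMeasureOnCompacts κ] (hρ : TVLE φ ρ)
    (h : ∀ u v : ℚ, u < v → |φ (Ioc u v)| ≤ (κ (Ioc u v)).toReal) : TVLE φ κ := by
  refine TVLE.of_abs_le fun B hB => le_of_forall_pos_le_add fun ε hε => ?_
  obtain ⟨u, v, hBW⟩ := exists_ratIoc_superset hB.2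
  have hW : Ioc (u : ℝ) v ∈ supClosure ratIocs := subset_supClosure ⟨u, v, rfl⟩
  have : IsFiniteMeasure ((ρ + κ).restrict (Ioc (u : ℝ) v)) :=
    isFiniteMeasure_restrict.2 (Metric.isBounded_Ioc _ _).measure_lt_top.ne
  obtain ⟨t, ht, htB⟩ := exists_measure_symmDiff_lt_of_generateFrom_isSetSemiring
    (μ := (ρ + κ).restrict (Ioc (u : ℝ) v)) isSetSemiring_ratIocs
    ⟨{Ioc (u : ℝ) v}, countable_singleton _, by simpa using ⟨u, v, rfl⟩, by simp⟩
    measurableSpace_eq_generateFrom_ratIocs hB.1 (ENNReal.ofReal_pos.2 hε)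
  -- restricting `t` to a window containing `B` keeps it close to `B` for the unrestricted measure
  have ht' := isSetSemiring_ratIocs.isSetRing_supClosure.inter_mem ht hW
  have hsmall : (ρ + κ) ((t ∩ Ioc (u : ℝ) v) ∆ B) ≤ ENNReal.ofReal ε := by
    refine le_trans ?_ htB.le
    rw [Measure.restrict_apply' measurableSet_Ioc]
    refine measure_mono fun x hx => ?_
    rcases hx with ⟨⟨hxt, hxW⟩, hxB⟩ | ⟨hxB, hxt⟩
    · exact ⟨Or.inl ⟨hxt, hxB⟩, hxW⟩
    · exact ⟨Or.inr ⟨hxB, fun h => hxt ⟨h, hBW hxB⟩⟩, hBW hxB⟩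
  have := hφ.abs_le_add_of_symmDiff hρ hB (supClosure_ratIocs_subset ht')
    (hφ.abs_le_of_mem_supClosure h ht')
  linarith [ENNReal.toReal_le_of_le_ofReal hε.le hsmall]

end IsBMeasure

lemma MeasureTheory.Measure.real_Ioc_eq_integral_sub (μ : Measure ℝ) [IsLocallyFiniteMeasure μ]
    {s t : ℝ} (hst : s ≤ t) :
    μ.real (Ioc s t) = ∫ _ in (0 : ℝ)..t, (1 : ℝ) ∂μ - ∫ _ in (0 : ℝ)..s, 1 ∂μ := by
  rw [intervalIntegral.integral_interval_sub_left intervalIntegrable_const intervalIntegrable_const,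
    intervalIntegral.integral_const', Ioc_eq_empty (not_lt.2 hst)]
  simp

def IsEquicontinuousFamily {ι : Type*} (m : ι → Measure ℝ) : Prop :=
  ∀ ε > (0 : ℝ), ∃ δ > (0 : ℝ), ∀ i, ∀ s t : ℝ, 0 ≤ t - s → t - s < δ →
    m i (Icc s t) < ENNReal.ofReal ε

namespace IsEquicontinuousFamily

variable {ι : Type*} {m : ι → Measure ℝ}

lemma measure_singleton (h : IsEquicontinuousFamily m) (i : ι) (t : ℝ) : m i {t} = 0 := by
  refine nonpos_iff_eq_zero.1 (ENNReal.le_of_forall_pos_le_add fun ε hε _ => ?_)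
  obtain ⟨δ, hδ, hd⟩ := h ε (by exact_mod_cast hε)
  simpa using (hd i t t (by simp) (by simpa using hδ)).le

lemma exists_measure_Icc_le (h : IsEquicontinuousFamily m) (s t : ℝ) :
    ∃ C : NNReal, ∀ i, m i (Icc s t) ≤ C := by
  obtain ⟨δ, hδ, hd⟩ := h 1 one_pos
  have short : ∀ i s, m i (Icc s (s + δ / 2)) ≤ 1 := fun i s =>
    (hd i s _ (by linarith) (by linarith)).le.trans_eq ENNReal.ofReal_one
  have chain : ∀ k : ℕ, ∀ i s t, t - s ≤ k * (δ / 2) → m i (Icc s t) ≤ k + 1 := by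
    intro k
    induction k with
    | zero =>
      intro i s t hst
      exact (measure_mono (Icc_subset_Icc_right (by simp at hst; linarith))).trans
        ((short i s).trans (by simp))
    | succ k ih =>
      intro i s t hst
      calc m i (Icc s t) ≤ m i (Icc s (s + δ / 2)) + m i (Icc (s + δ / 2) t) :=
            (measure_mono Icc_subset_Icc_union_Icc).trans (measure_union_le _ _)
        _ ≤ 1 + (k + 1) := add_le_add (short i s) (ih i _ _ (by push_cast at hst; linarith))
        _ = ((k + 1 : ℕ) : ENNReal) + 1 := by push_cast; ring
  refine ⟨⌈(t - s) / (δ / 2)⌉₊ + 1, fun i => (chain _ i s t ?_).trans_eq (by push_cast; rfl)⟩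
  rw [← div_le_iff₀ (by positivity)]
  exact Nat.le_ceil _

lemma isLocallyFiniteMeasure (h : IsEquicontinuousFamily m) (i : ι) :
    IsLocallyFiniteMeasure (m i) := by
  refine ⟨fun x => ⟨Icc (x - 1) (x + 1), Icc_mem_nhds (by linarith) (by linarith), ?_⟩⟩
  obtain ⟨C, hC⟩ := h.exists_measure_Icc_le (x - 1) (x + 1)
  exact (hC i).trans_lt ENNReal.coe_lt_top

lemma exists_tendsto_measure_Icc (h : IsEquicontinuousFamily m) (u : Ultrafilter ι) :
    ∃ F : ℝ → ℝ, ∀ s t, s ≤ t →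
      Tendsto (fun i => (m i (Icc s t)).toReal) u (𝓝 (F t - F s)) := by
  have := h.isLocallyFiniteMeasure
  have : ∀ i, NullSingletonClass (m i) := fun i => ⟨h.measure_singleton i⟩
  let G : ι → ℝ → ℝ := fun i t => ∫ _ in (0 : ℝ)..t, (1 : ℝ) ∂(m i)
  have hG : ∀ t, ∃ c, Tendsto (fun i => G i t) u (𝓝 c) := by
    intro t
    obtain ⟨C, hC⟩ := h.exists_measure_Icc_le (min 0 t) (max 0 t)
    have hCreal : ∀ i, ∀ s ⊆ Icc (min 0 t) (max 0 t), (m i).real s ≤ C := fun i s hs =>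
      ENNReal.toReal_le_of_le_ofReal C.2 ((measure_mono hs).trans (by simpa using hC i))
    have hGC : ∀ i, G i t ∈ Icc (-(C : ℝ)) C := fun i => by
      have h₁ := hCreal i (Ioc 0 t) fun x hx => ⟨min_le_left _ _ |>.trans hx.1.le,
        hx.2.trans (le_max_right _ _)⟩
      have h₂ := hCreal i (Ioc t 0) fun x hx => ⟨min_le_right _ _ |>.trans hx.1.le,
        hx.2.trans (le_max_left _ _)⟩
      simp only [G, intervalIntegral.integral_const', smul_eq_mul, mul_one]
      constructor <;> linarith [measureReal_nonneg (μ := m i) (s := Ioc 0 t),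
        measureReal_nonneg (μ := m i) (s := Ioc t 0)]
    obtain ⟨c, -, hc⟩ := isCompact_Icc.ultrafilter_le_nhds (u.map fun i => G i t)
      (by rw [Ultrafilter.coe_map, le_principal_iff, mem_map]; exact univ_mem' hGC)
    exact ⟨c, hc⟩
  choose F hF using hG
  refine ⟨F, fun s t hst => ((hF t).sub (hF s)).congr fun i => ?_⟩
  rw [← (m i).real_Ioc_eq_integral_sub hst, measureReal_def, measure_congr Ioc_ae_eq_Icc]

lemma exists_goodMeasure_tendsto (h : IsEquicontinuousFamily m) (u : Ultrafilter ι) :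
    ∃ κ : Measure ℝ, GoodMeasure κ ∧ IsEquicontinuousFamily (fun _ : Unit => κ) ∧
      ∀ s t, Tendsto (fun i => (m i (Icc s t)).toReal) u (𝓝 (κ (Icc s t)).toReal) := by
  obtain ⟨F, hF⟩ := h.exists_tendsto_measure_Icc u
  have hmono : Monotone F := fun s t hst =>
    sub_nonneg.1 (ge_of_tendsto' (hF s t hst) fun _ => ENNReal.toReal_nonneg)
  have hmod : ∀ ε > 0, ∃ δ > 0, ∀ s t, 0 ≤ t - s → t - s < δ → F t - F s ≤ ε := by
    intro ε hε
    obtain ⟨δ, hδ, hd⟩ := h ε hε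
    exact ⟨δ, hδ, fun s t h₀ h₁ => le_of_tendsto' (hF s t (by linarith)) fun i =>
      ENNReal.toReal_le_of_le_ofReal hε.le (hd i s t h₀ h₁).le⟩
  have hcont : Continuous F := by
    refine (Metric.uniformContinuous_iff.2 fun ε hε => ?_).continuous
    obtain ⟨δ, hδ, hd⟩ := hmod (ε / 2) (half_pos hε)
    refine ⟨δ, hδ, fun a b hab => ?_⟩
    wlog hle : a ≤ b generalizing a b
    · rw [dist_comm] at hab ⊢
      exact this b a hab (le_of_not_ge hle)
    rw [dist_comm, Real.dist_eq, abs_of_nonneg (sub_nonneg.2 (hmono hle))]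
    rw [dist_comm, Real.dist_eq, abs_of_nonneg (sub_nonneg.2 hle)] at hab
    linarith [hd a b (sub_nonneg.2 hle) hab]
  let f : StieltjesFunction ℝ := ⟨F, hmono, fun x => hcont.continuousWithinAt⟩
  have hleft : ∀ x, Function.leftLim F x = F x := fun x =>
    leftLim_eq_of_tendsto ((hcont.tendsto x).mono_left nhdsWithin_le_nhds)
  have hIcc : ∀ s t, s ≤ t → f.measure (Icc s t) = ENNReal.ofReal (F t - F s) := fun s t _ => by
    rw [f.measure_Icc]
    exact congrArg _ (congrArg _ (hleft s))
  refine ⟨f.measure, ⟨inferInstance, fun x => ?_⟩, fun ε hε => ?_, fun s t => ?_⟩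
  · rw [f.measure_singleton]
    exact ENNReal.ofReal_eq_zero.2 (sub_nonpos.2 (hleft x).ge)
  · obtain ⟨δ, hδ, hd⟩ := hmod (ε / 2) (half_pos hε)
    refine ⟨δ, hδ, fun _ s t h₀ h₁ => ?_⟩
    rw [hIcc s t (by linarith), ENNReal.ofReal_lt_ofReal_iff hε]
    linarith [hd s t h₀ h₁]
  · rcases le_or_gt s t with hst | hst
    · rw [hIcc s t hst, ENNReal.toReal_ofReal (sub_nonneg.2 (hmono hst))]
      exact hF s t hst
    · simp [Icc_eq_empty (not_le.2 hst)]

end IsEquicontinuousFamily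

lemma Dense.le_of_mem_closedBall {F : Type*} [NormedAddCommGroup F] [NormedSpace ℝ F]
    {D : Set F} (hD : Dense D) {r : ℝ} (hr : r ≠ 0) {f g : F → ℝ}
    (hf : ContinuousOn f (Metric.closedBall 0 r)) (hg : ContinuousOn g (Metric.closedBall 0 r))
    (h : ∀ y ∈ D, ‖y‖ ≤ r → f y ≤ g y) {y : F} (hy : ‖y‖ ≤ r) : f y ≤ g y := by
  have hsub : closure (Metric.ball (0 : F) r ∩ D) ⊆ {x | x ∈ Metric.closedBall 0 r ∧ f x ≤ g x} :=
    (Metric.isClosed_closedBall.isClosed_le hf hg).closure_subset_iff.2 fun x hx =>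
      ⟨Metric.ball_subset_closedBall hx.1,
        h x hx.2 (mem_closedBall_zero_iff.1 (Metric.ball_subset_closedBall hx.1))⟩
  have hy' : y ∈ closure (Metric.ball (0 : F) r) := by
    rwa [closure_ball 0 hr, mem_closedBall_zero_iff]
  exact (hsub (closure_minimal (hD.open_subset_closure_inter Metric.isOpen_ball)
    isClosed_closure hy')).2

lemma HasLBound.continuousOn_apply {E : Type*} [NormedAddCommGroup E] {w : ℝ → ℝ}
    {ν : E → Set ℝ → ℝ} {j : ℕ} {l : Measure ℝ} (hl : HasLBound w ν j l)
    (hw : ContinuousOn w (Ici 0)) (hw0 : w 0 = 0) {B : Set ℝ} (hB : B ∈ boundedMeasurableSets) :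
    ContinuousOn (fun y => ν y B) (Metric.closedBall 0 j) := by
  intro y hy
  rw [ContinuousWithinAt, tendsto_iff_norm_sub_tendsto_zero]
  have hdist : Tendsto (fun z => ‖z - y‖) (𝓝[Metric.closedBall 0 j] y) (𝓝[Ici 0] 0) :=
    tendsto_nhdsWithin_iff.2
      ⟨(tendsto_norm_sub_self y).mono_left nhdsWithin_le_nhds, .of_forall fun _ => norm_nonneg _⟩
  have hw' := ((hw 0 self_mem_Ici).tendsto.comp hdist).mul_const (l B).toReal
  rw [hw0, zero_mul] at hw'
  refine squeeze_zero' (.of_forall fun _ => norm_nonneg _) ?_ hw'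
  filter_upwards [self_mem_nhdsWithin] with z hz
  exact (hl.2 z y (mem_closedBall_zero_iff.1 hz) (mem_closedBall_zero_iff.1 hy)).abs_sub_le_s8 hB

section LimitBounds

variable {E : Type*} [NormedAddCommGroup E] [NormedSpace ℝ E] {D : Set E}
  {ν : ℕ → E → Set ℝ → ℝ} {μ : E → Set ℝ → ℝ} {w : ℝ → ℝ} {j : ℕ} {mμ lμ : Measure ℝ}

lemma exists_equicontinuous_hasMBound_of_tendsto (hD : Dense D) (hj : j ≠ 0)
    (hw : ContinuousOn w (Ici 0)) (hw0 : w 0 = 0) (hμ : ∀ y, IsBMeasure (μ y))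
    (hmμ : HasMBound μ j mμ) (hlμ : HasLBound w μ j lμ) {m : ℕ → Measure ℝ}
    (hm : ∀ n y, ‖y‖ ≤ j → TVLE (ν n y) (m n)) (heq : IsEquicontinuousFamily m)
    (hconv : ∀ y ∈ D, ∀ q₁ q₂ : ℚ, q₁ < q₂ →
      Tendsto (fun n => ν n y (Icc q₁ q₂)) atTop (𝓝 (μ y (Icc q₁ q₂)))) :
    ∃ κ, HasMBound μ j κ ∧ IsEquicontinuousFamily (fun _ : Unit => κ) := by
  obtain ⟨κ, hκ, hκeq, hlim⟩ := heq.exists_goodMeasure_tendsto (hyperfilter ℕ)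
  have hbound : ∀ y, ‖y‖ ≤ j → ∀ q₁ q₂ : ℚ, q₁ < q₂ →
      |μ y (Icc q₁ q₂)| ≤ (κ (Icc q₁ q₂)).toReal := by
    intro y hy q₁ q₂ hq
    refine hD.le_of_mem_closedBall (Nat.cast_ne_zero.2 hj)
      (hlμ.continuousOn_apply hw hw0 (Icc_mem_boundedMeasurableSets _ _)).abs
      continuousOn_const (fun z hzD hz => ?_) hy
    exact le_of_tendsto_of_tendsto' ((hconv z hzD q₁ q₂ hq).mono_left Nat.hyperfilter_le_atTop).abs
      (hlim _ _) fun n => (hm n z hz).abs_le (Icc_mem_boundedMeasurableSets _ _)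
  have := hκ.1
  have := hmμ.1.1
  have : NullSingletonClass κ := ⟨hκ.2⟩
  refine ⟨κ, ⟨hκ, fun y hy => (hμ y).tvle_of_abs_Ioc_le (hmμ.2 y hy) fun q₁ q₂ hq => ?_⟩, hκeq⟩
  rw [(hμ y).apply_Ioc, measure_congr Ioc_ae_eq_Icc]
  exact hbound y hy q₁ q₂ hq

lemma exists_equicontinuous_hasLBound_of_tendsto (hD : Dense D) (hj : j ≠ 0)
    (hw : ContinuousOn w (Ici 0)) (hw0 : w 0 = 0) (hw_nonneg : ∀ x, 0 ≤ x → 0 ≤ w x)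
    (hμ : ∀ y, IsBMeasure (μ y)) (hmμ : HasMBound μ j mμ) (hlμ : HasLBound w μ j lμ)
    {l : ℕ → Measure ℝ} (hl : ∀ n y₁ y₂, ‖y₁‖ ≤ j → ‖y₂‖ ≤ j →
      DiffLE (ν n y₁) (ν n y₂) (w ‖y₁ - y₂‖) (l n)) (heq : IsEquicontinuousFamily l)
    (hconv : ∀ y ∈ D, ∀ q₁ q₂ : ℚ, q₁ < q₂ →
      Tendsto (fun n => ν n y (Icc q₁ q₂)) atTop (𝓝 (μ y (Icc q₁ q₂)))) :
    ∃ κ, HasLBound w μ j κ ∧ IsEquicontinuousFamily (fun _ : Unit => κ) := by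
  obtain ⟨κ, hκ, hκeq, hlim⟩ := heq.exists_goodMeasure_tendsto (hyperfilter ℕ)
  have hball : ∀ p : E × E, ‖p‖ ≤ j ↔ ‖p.1‖ ≤ j ∧ ‖p.2‖ ≤ j := fun p => by
    rw [Prod.norm_def, max_le_iff]
  have hbound : ∀ y₁ y₂ : E, ‖y₁‖ ≤ j → ‖y₂‖ ≤ j → ∀ q₁ q₂ : ℚ, q₁ < q₂ →
      |μ y₁ (Icc q₁ q₂) - μ y₂ (Icc q₁ q₂)| ≤ w ‖y₁ - y₂‖ * (κ (Icc q₁ q₂)).toReal := by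
    intro y₁ y₂ hy₁ hy₂ q₁ q₂ hq
    have hc := hlμ.continuousOn_apply hw hw0 (Icc_mem_boundedMeasurableSets q₁ q₂)
    refine (hD.prod hD).le_of_mem_closedBall (f := fun p => |μ p.1 _ - μ p.2 _|)
      (g := fun p => w ‖p.1 - p.2‖ * _) (Nat.cast_ne_zero.2 hj) ?_ ?_ (fun p hpD hp => ?_)
      (y := (y₁, y₂)) ((hball _).2 ⟨hy₁, hy₂⟩)
    · have hfst : MapsTo Prod.fst (Metric.closedBall (0 : E × E) j) (Metric.closedBall 0 j) :=
        fun p hp => mem_closedBall_zero_iff.2 ((norm_fst_le p).trans (mem_closedBall_zero_iff.1 hp))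
      have hsnd : MapsTo Prod.snd (Metric.closedBall (0 : E × E) j) (Metric.closedBall 0 j) :=
        fun p hp => mem_closedBall_zero_iff.2 ((norm_snd_le p).trans (mem_closedBall_zero_iff.1 hp))
      exact ((hc.comp continuousOn_fst hfst).sub (hc.comp continuousOn_snd hsnd)).abs
    · exact (hw.comp (continuous_fst.sub continuous_snd).norm.continuousOn
        fun _ _ => norm_nonneg _).mul continuousOn_const
    · have hp' := (hball p).1 hp
      exact le_of_tendsto_of_tendsto'
        (((hconv p.1 hpD.1 q₁ q₂ hq).sub (hconv p.2 hpD.2 q₁ q₂ hq)).mono_left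
          Nat.hyperfilter_le_atTop).abs ((hlim _ _).const_mul _)
        fun n => (hl n p.1 p.2 hp'.1 hp'.2).abs_sub_le_s8 (Icc_mem_boundedMeasurableSets _ _)
  have := hκ.1
  have := hmμ.1.1
  have : NullSingletonClass κ := ⟨hκ.2⟩
  refine ⟨κ, ⟨hκ, fun y₁ y₂ hy₁ hy₂ => ?_⟩, hκeq⟩
  have hc := hw_nonneg _ (norm_nonneg (y₁ - y₂))
  have := IsFiniteMeasureOnCompacts.smul κ (ENNReal.ofReal_ne_top (r := w ‖y₁ - y₂‖))
  refine DiffLE.of_tvle hc (((hμ y₁).sub (hμ y₂)).tvle_of_abs_Ioc_le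
    ((hmμ.2 y₁ hy₁).sub (hmμ.2 y₂ hy₂)) fun q₁ q₂ hq => ?_)
  rw [Pi.sub_apply, (hμ y₁).apply_Ioc, (hμ y₂).apply_Ioc, Measure.smul_apply,
    measure_congr Ioc_ae_eq_Icc, smul_eq_mul, ENNReal.toReal_mul, ENNReal.toReal_ofReal hc]
  exact hbound y₁ y₂ hy₁ hy₂ q₁ q₂ hq

end LimitBounds

theorem stmt8_general {N : ℕ} (ω : ℕ → ℝ → ℝ) (hω : IsModulusFamily ω)
    (D : Set (EuclideanSpace ℝ (Fin N))) (hDd : Dense D)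
    (ν : ℕ → EuclideanSpace ℝ (Fin N) → Set ℝ → ℝ)
    (mB lB : ℕ → ℕ → Measure ℝ)
    (hmB : ∀ n j, 1 ≤ j → HasMBound (ν n) j (mB n j))
    (hlB : ∀ n j, 1 ≤ j → HasLBound (ω j) (ν n) j (lB n j))
    (hmeq : ∀ j, 1 ≤ j → ∀ ε > (0 : ℝ), ∃ δ > (0 : ℝ), ∀ n, ∀ s t : ℝ,
      0 ≤ t - s → t - s < δ → mB n j (Set.Icc s t) < ENNReal.ofReal ε)
    (hleq : ∀ j, 1 ≤ j → ∀ ε > (0 : ℝ), ∃ δ > (0 : ℝ), ∀ n, ∀ s t : ℝ,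
      0 ≤ t - s → t - s < δ → lB n j (Set.Icc s t) < ENNReal.ofReal ε)
    (μ : EuclideanSpace ℝ (Fin N) → Set ℝ → ℝ) (hμ : IsParamBMeasure ω μ)
    (hconv : ∀ y ∈ D, ∀ q₁ q₂ : ℚ, q₁ < q₂ →
      Tendsto (fun n => ν n y (Set.Icc (q₁ : ℝ) (q₂ : ℝ))) atTop
        (𝓝 (μ y (Set.Icc (q₁ : ℝ) (q₂ : ℝ))))) :
    (∀ j, 1 ≤ j → ∃ m : Measure ℝ, HasMBound μ j m ∧
      ∀ ε > (0 : ℝ), ∃ δ > (0 : ℝ), ∀ s t : ℝ,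
        0 ≤ t - s → t - s < δ → m (Set.Icc s t) < ENNReal.ofReal ε) ∧
    (∀ j, 1 ≤ j → ∃ l : Measure ℝ, HasLBound (ω j) μ j l ∧
      ∀ ε > (0 : ℝ), ∃ δ > (0 : ℝ), ∀ s t : ℝ,
        0 ≤ t - s → t - s < δ → l (Set.Icc s t) < ENNReal.ofReal ε) := by
  have single : ∀ κ : Measure ℝ, IsEquicontinuousFamily (fun _ : Unit => κ) →
      ∀ ε > (0 : ℝ), ∃ δ > (0 : ℝ), ∀ s t : ℝ,
        0 ≤ t - s → t - s < δ → κ (Set.Icc s t) < ENNReal.ofReal ε :=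
    fun κ h ε hε => (h ε hε).imp fun _ hδ => ⟨hδ.1, hδ.2 ()⟩
  refine ⟨fun j hj => ?_, fun j hj => ?_⟩ <;> obtain ⟨mμ, lμ, hmμ, hlμ⟩ := hμ.2 j hj
  · obtain ⟨κ, hκ, hκeq⟩ := exists_equicontinuous_hasMBound_of_tendsto hDd (by omega)
      (hω.continuousOn j) (hω.map_zero j) hμ.1 hmμ hlμ (fun n => (hmB n j hj).2) (hmeq j hj)
      hconv
    exact ⟨κ, hκ, single κ hκeq⟩
  · obtain ⟨κ, hκ, hκeq⟩ := exists_equicontinuous_hasLBound_of_tendsto hDd (by omega)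
      (hω.continuousOn j) (hω.map_zero j) (hω.nonneg j) hμ.1 hmμ hlμ (fun n => (hlB n j hj).2)
      (hleq j hj) hconv
    exact ⟨κ, hκ, single κ hκeq⟩

theorem stmt8 {N : ℕ} (ω : ℕ → ℝ → ℝ) (hω : IsModulusFamily ω)
    (D : Set (EuclideanSpace ℝ (Fin N))) (hDc : D.Countable) (hDd : Dense D)
    (ν : ℕ → EuclideanSpace ℝ (Fin N) → Set ℝ → ℝ)
    (hν : ∀ n, IsParamBMeasure ω (ν n))
    (mB lB : ℕ → ℕ → Measure ℝ)
    (hmB : ∀ n j, 1 ≤ j → HasMBound (ν n) j (mB n j))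
    (hlB : ∀ n j, 1 ≤ j → HasLBound (ω j) (ν n) j (lB n j))
    (hmeq : ∀ j, 1 ≤ j → ∀ ε > (0 : ℝ), ∃ δ > (0 : ℝ), ∀ n, ∀ s t : ℝ,
      0 ≤ t - s → t - s < δ → mB n j (Set.Icc s t) < ENNReal.ofReal ε)
    (hleq : ∀ j, 1 ≤ j → ∀ ε > (0 : ℝ), ∃ δ > (0 : ℝ), ∀ n, ∀ s t : ℝ,
      0 ≤ t - s → t - s < δ → lB n j (Set.Icc s t) < ENNReal.ofReal ε)
    (μ : EuclideanSpace ℝ (Fin N) → Set ℝ → ℝ) (hμ : IsParamBMeasure ω μ)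
    (hconv : ∀ y ∈ D, ∀ q₁ q₂ : ℚ, q₁ < q₂ →
      Tendsto (fun n => ν n y (Set.Icc (q₁ : ℝ) (q₂ : ℝ))) atTop
        (𝓝 (μ y (Set.Icc (q₁ : ℝ) (q₂ : ℝ))))) :
    (∀ j, 1 ≤ j → ∃ m : Measure ℝ, HasMBound μ j m ∧
      ∀ ε > (0 : ℝ), ∃ δ > (0 : ℝ), ∀ s t : ℝ,
        0 ≤ t - s → t - s < δ → m (Set.Icc s t) < ENNReal.ofReal ε) ∧
    (∀ j, 1 ≤ j → ∃ l : Measure ℝ, HasLBound (ω j) μ j l ∧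
      ∀ ε > (0 : ℝ), ∃ δ > (0 : ℝ), ∀ s t : ℝ,
        0 ≤ t - s → t - s < δ → l (Set.Icc s t) < ENNReal.ofReal ε) :=
  stmt8_general ω hω D hDd ν mB lB hmB hlB hmeq hleq μ hμ hconv
end
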